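/- Fix a string s and group its nonempty suffix-palindromes into maximal consecutive groups (series) with the same minimal period. If r is the length of the shortest palindrome (tail) of one series, then the longest palindrome (head) of the next series has length less than 2r/3. -/

import Mathlib

/-- `p` is a period of `w`: letters at distance `p` agree. -/
def HasPeriod {α : Type*} (w : List α) (p : ℕ) : Prop :=
  ∀ i : ℕ, i + p < w.length → w[i]? = w[i + p]?

/-- The minimal period of `w`. -/
noncomputable def minPeriod {α : Type*} (w : List α) : ℕ :=
  sInf {p : ℕ | 0 < p ∧ HasPeriod w p}

/-- `k`-th power of a list: `k` concatenated copies of `w`. -/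
def listPow {α : Type*} (w : List α) (k : ℕ) : List α := (List.replicate k w).flatten

/-- `s` admits a factorization into exactly `k` nonempty palindromes. -/
def HasPalFact {α : Type*} (s : List α) (k : ℕ) : Prop :=
  ∃ L : List (List α), L.length = k ∧ L.flatten = s ∧ ∀ w ∈ L, w ≠ [] ∧ w.reverse = w

/-- Palindromic length: minimum number of nonempty palindromic factors (`pl ε = 0`). -/
noncomputable def pl {α : Type*} (s : List α) : ℕ := sInf {k : ℕ | HasPalFact s k}

/-- `plParity j s` : minimum `k ≡ j (mod 2)` with a palindromic `k`-factorization, `⊤` if none. -/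
noncomputable def plParity {α : Type*} (j : ℕ) (s : List α) : ℕ∞ :=
  sInf {n : ℕ∞ | ∃ k : ℕ, n = (k : ℕ∞) ∧ k % 2 = j ∧ HasPalFact s k}

/-- The set of nonempty palindromic suffixes of `s` with minimal period exactly `p`
(the `p`-series of `s`). -/
def pSeries {α : Type*} (s : List α) (p : ℕ) : Set (List α) :=
  {w | w <:+ s ∧ w ≠ [] ∧ w.reverse = w ∧ minPeriod w = p}

/-!
Let `|u| = n`, `|v| = m` and `q = n - m`. Since `v` is both a suffix and (being a palindromic
suffix of the palindrome `u`) a prefix of `u`, the word `u` has period `q`. Conversely every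
period `p < n` of the palindrome `u` produces the palindromic suffix `u.drop p` of length `n - p`,
so maximality of `v` forces `p ≥ q`; in particular `q` is the minimal period of `u`.

Suppose `3m ≥ 2n`, i.e. `m ≥ 2q`. Then `v` has period `q` and its minimal period `r`, which
differs from `q`, satisfies `r < q`. As `q + r ≤ m`, `v` also has period `q - r`, and since
`m ≥ q + (q - r)` this period propagates along the `q`-periodic word `u`. This is a period of `u`
smaller than `q`: a contradiction.
-/

section Periods

variable {α : Type*}

theorem HasPeriod.of_prefix {u v : List α} {p : ℕ} (h : HasPeriod u p) (hvu : v <+: u) :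
    HasPeriod v p := by
  obtain ⟨t, rfl⟩ := hvu
  intro i hi
  have := h i (by rw [List.length_append]; omega)
  rwa [List.getElem?_append_left (by omega), List.getElem?_append_left hi] at this

theorem hasPeriod_of_border {u v : List α} (hpre : v <+: u) (hsuf : v <:+ u) :
    HasPeriod u (u.length - v.length) := by
  intro i hi
  rw [List.prefix_iff_eq_take.mp hpre] at hsuf
  obtain ⟨t, ht⟩ := hsuf
  have ht_len : t.length = u.length - v.length := by
    have := congrArg List.length ht
    simp only [List.length_append, List.length_take] at this; omega
  have hi' : i < v.length := by omega
  calc u[i]? = (u.take v.length)[i]? := by rw [List.getElem?_take_of_lt hi']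
    _ = (t ++ u.take v.length)[t.length + i]? := by
        rw [List.getElem?_append_right (by omega)]; simp
    _ = u[i + (u.length - v.length)]? := by rw [ht, ht_len, Nat.add_comm]

theorem HasPeriod.sub {w : List α} {p q : ℕ} (hp : HasPeriod w p) (hq : HasPeriod w q)
    (hqp : q ≤ p) (hlen : p + q ≤ w.length) : HasPeriod w (p - q) := by
  intro i hi
  rcases Nat.lt_or_ge i q with hiq | hiq
  · calc w[i]? = w[i + p]? := hp i (by omega)
      _ = w[i + (p - q)]? := by rw [hq (i + (p - q)) (by omega)]; congr 1; omega
  · calc w[i]? = w[i - q]? := by rw [hq (i - q) (by omega)]; congr 1; omega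
      _ = w[i + (p - q)]? := by rw [hp (i - q) (by omega)]; congr 1; omega

theorem HasPeriod.getElem?_mod {w : List α} {p : ℕ} (hp : HasPeriod w p) {i : ℕ}
    (hi : i < w.length) : w[i]? = w[i % p]? := by
  obtain rfl | hp0 := p.eq_zero_or_pos
  · rw [Nat.mod_zero]
  induction i using Nat.strong_induction_on with
  | _ i ih =>
    rcases Nat.lt_or_ge i p with hip | hip
    · rw [Nat.mod_eq_of_lt hip]
    · rw [Nat.mod_eq_sub_mod hip, ← ih (i - p) (by omega) (by omega), hp (i - p) (by omega)]
      congr 1; omega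

theorem HasPeriod.of_hasPeriod_prefix {u v : List α} {q d : ℕ} (hq : HasPeriod u q)
    (hq0 : 0 < q) (hvu : v <+: u) (hd : HasPeriod v d) (hlen : q + d ≤ v.length) :
    HasPeriod u d := by
  intro i hi
  have hmod : i % q < q := Nat.mod_lt i hq0
  have hv_len : v.length ≤ u.length := hvu.length_le
  rw [List.prefix_iff_eq_take.mp hvu] at hd
  have := hd (i % q) (by rw [List.length_take]; omega)
  rw [List.getElem?_take_of_lt (by omega), List.getElem?_take_of_lt (by omega)] at this
  rw [hq.getElem?_mod (by omega), hq.getElem?_mod hi, this, hq.getElem?_mod (by omega),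
    Nat.add_mod, Nat.mod_mod, ← Nat.add_mod]

theorem drop_eq_take_of_hasPeriod {u : List α} {p : ℕ} (hp : HasPeriod u p) :
    u.drop p = u.take (u.length - p) := by
  apply List.ext_getElem?
  intro i
  rw [List.getElem?_drop]
  by_cases hi : i < u.length - p
  · rw [List.getElem?_take_of_lt hi, hp i (by omega), Nat.add_comm]
  · rw [List.getElem?_take, if_neg hi, List.getElem?_eq_none (by omega)]

theorem reverse_drop_of_hasPeriod {u : List α} (hup : u.reverse = u) {p : ℕ}
    (hp : HasPeriod u p) : (u.drop p).reverse = u.drop p := by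
  rw [List.reverse_drop, hup, drop_eq_take_of_hasPeriod hp]

theorem minPeriod_pos_and_hasPeriod {w : List α} (hw : w ≠ []) :
    0 < minPeriod w ∧ HasPeriod w (minPeriod w) :=
  Nat.sInf_mem (s := {p | 0 < p ∧ HasPeriod w p})
    ⟨w.length, List.length_pos_iff.mpr hw, fun _ h => absurd h (by omega)⟩

theorem minPeriod_le {w : List α} {p : ℕ} (hp0 : 0 < p) (hp : HasPeriod w p) :
    minPeriod w ≤ p :=
  Nat.sInf_le ⟨hp0, hp⟩

end Periods

theorem next_series_head_short_general {α : Type*} (s u v : List α)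
    (hu : u <:+ s) (hup : u.reverse = u)
    (hv : v <:+ s) (hvp : v.reverse = v)
    (hlt : v.length < u.length)
    (hmax : ∀ w : List α, w <:+ s → w.reverse = w → w ≠ [] → w.length < u.length →
      w.length ≤ v.length)
    (hdiff : minPeriod v ≠ minPeriod u) :
    3 * v.length < 2 * u.length := by
  by_contra! hcon
  set q := u.length - v.length with hq_def
  have hvu : v <:+ u := (List.suffix_or_suffix_of_suffix hv hu).resolve_right
    fun h => absurd h.length_le (by omega)
  have hvpre : v <+: u := List.reverse_suffix.mp (by rwa [hvp, hup])
  have hq : HasPeriod u q := hasPeriod_of_border hvpre hvu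
  have hq_min : ∀ p, 0 < p → p < u.length → HasPeriod u p → q ≤ p := by
    intro p hp0 hpn hp
    have := hmax (u.drop p) ((List.drop_suffix p u).trans hu) (reverse_drop_of_hasPeriod hup hp)
      (List.ne_nil_of_length_pos (by rw [List.length_drop]; omega))
      (by rw [List.length_drop]; omega)
    rw [List.length_drop] at this; omega
  have hune : u ≠ [] := List.ne_nil_of_length_pos (by omega)
  obtain ⟨hu0, hu_min⟩ := minPeriod_pos_and_hasPeriod hune
  have hmu_le : minPeriod u ≤ q := minPeriod_le (by omega) hq
  have hmu : minPeriod u = q := le_antisymm hmu_le (hq_min _ hu0 (by omega) hu_min)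
  have hvne : v ≠ [] := List.ne_nil_of_length_pos (by omega)
  obtain ⟨hr0, hr⟩ := minPeriod_pos_and_hasPeriod hvne
  have hrq : minPeriod v < q :=
    lt_of_le_of_ne (minPeriod_le (by omega) (hq.of_prefix hvpre)) (hmu ▸ hdiff)
  have hv_sub : HasPeriod v (q - minPeriod v) :=
    (hq.of_prefix hvpre).sub hr hrq.le (by omega)
  have hu_sub := hq.of_hasPeriod_prefix (by omega) hvpre hv_sub (by omega)
  have := hq_min _ (by omega) (by omega) hu_sub
  omega

/-- if `u` is a nonempty suffix-palindrome of `s` (the tail of its series),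
and `v` is the longest suffix-palindrome of `s` strictly shorter than `u` (the head of the
next series, so its minimal period differs from that of `u`), then `|v| < 2|u|/3`. -/
theorem next_series_head_short {α : Type*} (s u v : List α)
    (hu : u <:+ s) (hup : u.reverse = u) (hune : u ≠ [])
    (hv : v <:+ s) (hvp : v.reverse = v) (hvne : v ≠ [])
    (hlt : v.length < u.length)
    (hmax : ∀ w : List α, w <:+ s → w.reverse = w → w ≠ [] → w.length < u.length →
      w.length ≤ v.length)
    (hdiff : minPeriod v ≠ minPeriod u) :
    3 * v.length < 2 * u.length :=
  next_series_head_short_general s u v hu hup hv hvp hlt hmax hdiff
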